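/- Let σ be the unique formal power series over ℂ with constant term 2 satisfying σ² = 4 + X², and define χ = X·(σ − X)·(2·(1+X²)²)⁻¹ (the χ-series, in the variable w = √z, of the free multiplicative convolution of the free Poisson distribution with the free Poisson distribution shifted by −1, whose S-transform is (−z+√(z²+4z))/(2z(1+z))). If ψ is a formal power series over ℂ with zero constant term satisfying ψ∘χ = X², then M = 1 + ψ satisfies the algebraic equation X²·M⁴ + X·M³ − X·M² − M + 1 = 0. (This is the formal power series form of the equation g⁴z² + z²g³ − zg² − gz + 1 = 0 for the Cauchy transform of μ ⊠ γ.) -/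

import Mathlib

/-!
Composition with `χ` is the substitution homomorphism `F ↦ F(χ)`, and it is injective because
`χ = X + O(X²)` has a compositional inverse. The polynomial
`P(X, M) = X²M⁴ + XM³ − XM² − M + 1` therefore vanishes at `M = 1 + ψ` as soon as
`P(χ, 1 + X²) = 0`. Clearing the denominator `2(1+X²)²`, the latter says `t² + 2Xt − 4 = 0`
for `t = σ − X`, which is `σ² = 4 + X²`.
-/

open PowerSeries Finset

/-- Formal composition `F ∘ G` of power series over `ℂ`, intended for the case where
`G` has zero constant term (so that only finitely many terms contribute to each
coefficient). -/
noncomputable def comp (F G : PowerSeries ℂ) : PowerSeries ℂ :=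
  PowerSeries.mk fun n =>
    PowerSeries.coeff n
      (∑ k ∈ Finset.range (n + 1), PowerSeries.C (PowerSeries.coeff k F) * G ^ k)

namespace PowerSeries

theorem subst_injective_of_isUnit_coeff_one {R : Type*} [CommRing R] {P : R⟦X⟧}
    (hP : constantCoeff P = 0) (hP' : IsUnit (coeff 1 P)) :
    Function.Injective (subst (R := R) P) := by
  have hQ := HasSubst.substInvOfIsUnit P hP'
  refine Function.LeftInverse.injective (g := subst (P.substInvOfIsUnit hP')) fun f ↦ ?_
  rw [subst_comp_subst_apply (HasSubst.of_constantCoeff_zero' hP) hQ,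
    subst_substInvOfIsUnit_right P hP hP', X_subst]

end PowerSeries

theorem comp_eq_subst {G : ℂ⟦X⟧} (hG : constantCoeff G = 0) (F : ℂ⟦X⟧) :
    comp F G = F.subst G := by
  ext n
  have hpow : ∀ d, n < d → coeff n (G ^ d) = 0 := fun d hd ↦
    coeff_of_lt_order n <|
      (Nat.cast_lt.mpr hd).trans_le (le_order_pow_of_constantCoeff_eq_zero d hG)
  rw [comp, coeff_mk, coeff_subst' (HasSubst.of_constantCoeff_zero' hG), map_sum,
    finsum_eq_sum_of_support_subset _ (s := range (n + 1))]
  · simp only [coeff_C_mul, smul_eq_mul]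
  · intro d hd
    by_contra hdn
    exact hd (by simp [hpow d (by simpa using hdn)])

theorem chi_relation {R : Type*} [CommRing R] {x s b c : R} (hs : s ^ 2 = 4 + x ^ 2)
    (hb : b * (2 * (1 + x ^ 2) ^ 2) = 1) (hc : c = x * (s - x) * b) :
    c ^ 2 * (1 + x ^ 2) ^ 4 + c * (1 + x ^ 2) ^ 3 - c * (1 + x ^ 2) ^ 2 - x ^ 2 = 0 := by
  subst hc
  set u := b * (1 + x ^ 2) ^ 2
  linear_combination (u ^ 2 * x ^ 2) * hs - (x ^ 3 * (s - x) * u - x ^ 2 * (1 + 2 * u)) * hb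

theorem stmt_15_general (σ χ ψ : PowerSeries ℂ)
    (hσ0 : PowerSeries.constantCoeff σ = 2)
    (hσ : σ ^ 2 = 4 + PowerSeries.X ^ 2)
    (hχdef : χ = PowerSeries.X * (σ - PowerSeries.X) *
      ((2 : PowerSeries ℂ) * (1 + PowerSeries.X ^ 2) ^ 2)⁻¹)
    (hψ : comp ψ χ = PowerSeries.X ^ 2) :
    PowerSeries.X ^ 2 * (1 + ψ) ^ 4 + PowerSeries.X * (1 + ψ) ^ 3
      - PowerSeries.X * (1 + ψ) ^ 2 - (1 + ψ) + 1 = 0 := by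
  set A : ℂ⟦X⟧ := 2 * (1 + X ^ 2) ^ 2
  have hA : constantCoeff A = 2 := by simp [A, map_ofNat]
  have hχ0 : constantCoeff χ = 0 := by simp [hχdef]
  have hχ1 : coeff 1 χ = 1 := by
    rw [hχdef, mul_assoc, coeff_succ_X_mul, coeff_zero_eq_constantCoeff_apply, map_mul,
      constantCoeff_inv, hA, map_sub, hσ0, constantCoeff_X]
    norm_num
  have hχ : HasSubst χ := HasSubst.of_constantCoeff_zero' hχ0
  apply subst_injective_of_isUnit_coeff_one hχ0 (hχ1 ▸ isUnit_one)
  rw [← coe_substAlgHom hχ, map_zero]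
  rw [comp_eq_subst hχ0, ← coe_substAlgHom hχ] at hψ
  simp only [map_add, map_sub, map_mul, map_pow, map_one, substAlgHom_X, hψ]
  linear_combination chi_relation hσ (PowerSeries.inv_mul_cancel A (by simp [hA])) hχdef

/-- Moment series of the free multiplicative convolution of the free Poisson
distribution with the free Poisson distribution shifted by `−1`: with
`σ = √(4 + X²)` (the series with constant term `2` and `σ² = 4 + X²`) and
χ-series `χ = X·(σ − X)/(2(1+X²)²)` (in the variable `w = √z`, coming from the
S-transform `(−z+√(z²+4z))/(2z(1+z))`), any `ψ` with zero constant term and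
`ψ ∘ χ = X²` has `M = 1 + ψ` satisfying `X²·M⁴ + X·M³ − X·M² − M + 1 = 0` — the
formal power series form of `g⁴z² + z²g³ − zg² − gz + 1 = 0` for the Cauchy
transform of `μ ⊠ γ`. -/
theorem stmt_15 (σ χ ψ : PowerSeries ℂ)
    (hσ0 : PowerSeries.constantCoeff σ = 2)
    (hσ : σ ^ 2 = 4 + PowerSeries.X ^ 2)
    (hχdef : χ = PowerSeries.X * (σ - PowerSeries.X) *
      ((2 : PowerSeries ℂ) * (1 + PowerSeries.X ^ 2) ^ 2)⁻¹)
    (hψ0 : PowerSeries.constantCoeff ψ = 0)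
    (hψ : comp ψ χ = PowerSeries.X ^ 2) :
    PowerSeries.X ^ 2 * (1 + ψ) ^ 4 + PowerSeries.X * (1 + ψ) ^ 3
      - PowerSeries.X * (1 + ψ) ^ 2 - (1 + ψ) + 1 = 0 :=
  stmt_15_general σ χ ψ hσ0 hσ hχdef hψ
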